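/- arXiv:1108.2256 — 2 statements merged into one kernel-verified Lean document; each statement's English description precedes it below -/
import Mathlib

section
/- Let T be a positive self-adjoint bounded operator on L²(μ) for a σ-finite measure μ, and suppose T is positivity improving: for every f ≥ 0 with f ≠ 0, Tf > 0 almost everywhere. If λ = ‖T‖ is an eigenvalue of T, then the corresponding eigenspace is one-dimensional and is spanned by an a.e. strictly positive function. -/
/-!
If `T u = ‖T‖ u`, positivity of `T` gives `|T u| ≤ T |u|`, hence
`‖T‖ ‖u‖² = ⟪u, T u⟫ ≤ ⟪|u|, T |u|⟫ ≤ ‖T‖ ‖u‖²`; equality in Cauchy–Schwarz makes `|u|` an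
eigenvector too, and so are `|u| ± u ≥ 0`. Positivity improvement makes every nonzero nonnegative
eigenvector a.e. strictly positive, so the orthogonal pair `|u| + u`, `|u| - u` cannot both be
nonzero: every eigenvector has constant sign. A constant-sign eigenvector cannot be orthogonal to
the strictly positive eigenvector `|f|`, which therefore spans the eigenspace.
-/

open MeasureTheory
open scoped InnerProductSpace

lemma abs_ne_zero_of_ne_zero {E : Type*} [NormedAddCommGroup E] [Lattice E] [HasSolidNorm E]
    [IsOrderedAddMonoid E] {a : E} (ha : a ≠ 0) : |a| ≠ 0 := by
  rwa [← norm_ne_zero_iff, norm_abs_eq_norm, norm_ne_zero_iff]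

lemma abs_apply_le_apply_abs {E F : Type*} [AddCommGroup E] [Lattice E] [IsOrderedAddMonoid E]
    [AddCommGroup F] [Lattice F] [IsOrderedAddMonoid F] {T : E →+ F} (hT : Monotone T) (u : E) :
    |T u| ≤ T |u| :=
  abs_le'.mpr ⟨hT (le_abs_self u), by simpa only [map_neg, abs_neg] using hT (le_abs_self (-u))⟩

lemma ContinuousLinearMap.apply_eq_norm_smul_of_norm_mul_sq_le_inner {E : Type*}
    [NormedAddCommGroup E] [InnerProductSpace ℝ E] (T : E →L[ℝ] E) {v : E}
    (h : ‖T‖ * ‖v‖ ^ 2 ≤ ⟪v, T v⟫_ℝ) : T v = ‖T‖ • v := by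
  have hTv : ‖T v‖ ≤ ‖T‖ * ‖v‖ := T.le_opNorm v
  have hsq : ‖T v - ‖T‖ • v‖ ^ 2 ≤ 0 := by
    rw [norm_sub_sq_real, real_inner_smul_right, real_inner_comm, norm_smul, Real.norm_eq_abs,
      abs_of_nonneg (norm_nonneg T)]
    nlinarith [pow_le_pow_left₀ (norm_nonneg _) hTv 2, norm_nonneg T]
  exact sub_eq_zero.mp (norm_eq_zero.mp (by nlinarith [norm_nonneg (T v - ‖T‖ • v)]))

lemma Submodule.eq_span_singleton_of_inner_eq_zero {E : Type*} [NormedAddCommGroup E]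
    [InnerProductSpace ℝ E] {K : Submodule ℝ E} {g : E} (hg : g ∈ K)
    (h : ∀ v ∈ K, ⟪g, v⟫_ℝ = 0 → v = 0) : K = Submodule.span ℝ {g} := by
  refine le_antisymm (fun w hw => ?_) ((Submodule.span_singleton_le_iff_mem g K).mpr hg)
  set c := ⟪g, w⟫_ℝ / ⟪g, g⟫_ℝ
  have horth : ⟪g, w - c • g⟫_ℝ = 0 := by
    rw [inner_sub_right, real_inner_smul_right,
      div_mul_cancel_of_imp fun hgg => by simp [inner_self_eq_zero.mp hgg], sub_self]
  rw [← sub_add_cancel w (c • g), h _ (K.sub_mem hw (K.smul_mem c hg)) horth, zero_add]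
  exact Submodule.smul_mem _ _ (Submodule.mem_span_singleton_self g)

namespace MeasureTheory.L2

variable {X : Type*} [MeasurableSpace X] {μ : Measure X}

lemma real_inner_eq_integral_mul (f g : Lp ℝ 2 μ) : ⟪f, g⟫_ℝ = ∫ x, f x * g x ∂μ := by
  simp only [L2.inner_def, Real.inner_apply]

lemma integrable_mul (f g : Lp ℝ 2 μ) : Integrable (fun x => f x * g x) μ := by
  simpa only [Real.inner_apply] using L2.integrable_inner (𝕜 := ℝ) f g

lemma real_inner_nonneg {f g : Lp ℝ 2 μ} (hf : 0 ≤ f) (hg : 0 ≤ g) : 0 ≤ ⟪f, g⟫_ℝ := by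
  rw [real_inner_eq_integral_mul]
  refine integral_nonneg_of_ae ?_
  filter_upwards [(Lp.coeFn_nonneg f).mpr hf, (Lp.coeFn_nonneg g).mpr hg] with x hfx hgx
    using mul_nonneg hfx hgx

lemma real_inner_le_real_inner_of_nonneg_left {f g h : Lp ℝ 2 μ} (hf : 0 ≤ f) (hgh : g ≤ h) :
    ⟪f, g⟫_ℝ ≤ ⟪f, h⟫_ℝ := by
  simpa only [inner_sub_right, sub_nonneg] using real_inner_nonneg hf (sub_nonneg.mpr hgh)

lemma real_inner_le_real_inner_abs_abs (f g : Lp ℝ 2 μ) : ⟪f, g⟫_ℝ ≤ ⟪|f|, |g|⟫_ℝ := by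
  rw [real_inner_eq_integral_mul, real_inner_eq_integral_mul]
  refine integral_mono_ae (integrable_mul f g) (integrable_mul |f| |g|) ?_
  filter_upwards [Lp.coeFn_abs f, Lp.coeFn_abs g] with x hfx hgx
  rw [hfx, hgx, ← abs_mul]
  exact le_abs_self _

lemma real_inner_pos {f g : Lp ℝ 2 μ} (hf : 0 ≤ f) (hf0 : f ≠ 0) (hg : ∀ᵐ x ∂μ, 0 < g x) :
    0 < ⟪f, g⟫_ℝ := by
  have hfg : 0 ≤ᵐ[μ] fun x => f x * g x := by
    filter_upwards [(Lp.coeFn_nonneg f).mpr hf, hg] with x hfx hgx using mul_nonneg hfx hgx.le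
  rw [real_inner_eq_integral_mul]
  refine (integral_nonneg_of_ae hfg).lt_of_ne fun h => hf0 ?_
  have hzero := (integral_eq_zero_iff_of_nonneg_ae hfg (integrable_mul f g)).mp h.symm
  rw [Lp.eq_zero_iff_ae_eq_zero]
  filter_upwards [hzero, hg] with x hfgx hgx
  exact (mul_eq_zero.mp hfgx).resolve_right hgx.ne'

lemma abs_mem_eigenspace_norm {T : Lp ℝ 2 μ →L[ℝ] Lp ℝ 2 μ} (hT : Monotone T) {u : Lp ℝ 2 μ}
    (hu : u ∈ Module.End.eigenspace T.toLinearMap ‖T‖) :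
    |u| ∈ Module.End.eigenspace T.toLinearMap ‖T‖ := by
  have hTu : T u = ‖T‖ • u := Module.End.mem_eigenspace_iff.mp hu
  refine Module.End.mem_eigenspace_iff.mpr (T.apply_eq_norm_smul_of_norm_mul_sq_le_inner ?_)
  calc ‖T‖ * ‖|u|‖ ^ 2 = ⟪u, T u⟫_ℝ := by
        rw [norm_abs_eq_norm, hTu, real_inner_smul_right, real_inner_self_eq_norm_sq]
    _ ≤ ⟪|u|, |T u|⟫_ℝ := real_inner_le_real_inner_abs_abs u (T u)
    _ ≤ ⟪|u|, T |u|⟫_ℝ :=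
        real_inner_le_real_inner_of_nonneg_left (abs_nonneg u)
          (abs_apply_le_apply_abs (T := T.toAddMonoidHom) hT u)

end MeasureTheory.L2

section PositivityImproving

open MeasureTheory.L2

variable {X : Type*} [MeasurableSpace X] {μ : Measure X}

def PositivityImproving (μ : Measure X) (T : Lp ℝ 2 μ →L[ℝ] Lp ℝ 2 μ) : Prop :=
  ∀ f : Lp ℝ 2 μ, 0 ≤ᵐ[μ] ⇑f → f ≠ 0 → ∀ᵐ x ∂μ, 0 < (T f : X → ℝ) x

variable {T : Lp ℝ 2 μ →L[ℝ] Lp ℝ 2 μ}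

lemma PositivityImproving.monotone (hT : PositivityImproving μ T) : Monotone T := by
  intro f g hfg
  obtain heq | hne := eq_or_ne (g - f) 0
  · rw [sub_eq_zero.mp heq]
  · rw [← sub_nonneg, ← map_sub, ← Lp.coeFn_nonneg]
    filter_upwards [hT _ ((Lp.coeFn_nonneg _).mpr (sub_nonneg.mpr hfg)) hne] with x hx using hx.le

lemma PositivityImproving.ae_pos_of_mem_eigenspace (hT : PositivityImproving μ T) {c : ℝ}
    (hc : 0 ≤ c) {v : Lp ℝ 2 μ} (hv : v ∈ Module.End.eigenspace T.toLinearMap c) (hv0 : 0 ≤ v)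
    (hne : v ≠ 0) : ∀ᵐ x ∂μ, 0 < v x := by
  have hTv : T v = c • v := Module.End.mem_eigenspace_iff.mp hv
  have hpos := hT v ((Lp.coeFn_nonneg v).mpr hv0) hne
  rw [hTv] at hpos
  filter_upwards [hpos, Lp.coeFn_smul c v] with x hx hcv
  rw [hcv] at hx
  exact pos_of_mul_pos_right hx hc

lemma PositivityImproving.eq_abs_or_eq_neg_abs (hT : PositivityImproving μ T) {u : Lp ℝ 2 μ}
    (hu : u ∈ Module.End.eigenspace T.toLinearMap ‖T‖) : u = |u| ∨ u = -|u| := by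
  have habs := abs_mem_eigenspace_norm hT.monotone hu
  have hplus_nonneg : 0 ≤ |u| + u := neg_le_iff_add_nonneg.mp (neg_le_abs u)
  have hminus_nonneg : 0 ≤ |u| - u := sub_nonneg.mpr (le_abs_self u)
  have horth : ⟪|u| + u, |u| - u⟫_ℝ = 0 :=
    (real_inner_add_sub_eq_zero_iff _ _).mpr (norm_abs_eq_norm u)
  by_contra! ⟨hplus, hminus⟩
  have hplus_ne : |u| + u ≠ 0 := fun h => hminus (eq_neg_of_add_eq_zero_right h)
  have hminus_ne : |u| - u ≠ 0 := fun h => hplus (sub_eq_zero.mp h).symm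
  have hminus_pos := hT.ae_pos_of_mem_eigenspace (norm_nonneg T)
    (Submodule.sub_mem _ habs hu) hminus_nonneg hminus_ne
  exact (real_inner_pos hplus_nonneg hplus_ne hminus_pos).ne' horth

end PositivityImproving

theorem perron_frobenius_faris_general
    {X : Type*} [MeasurableSpace X] (μ : Measure X)
    (T : Lp ℝ 2 μ →L[ℝ] Lp ℝ 2 μ)
    (hT_impr : ∀ f : Lp ℝ 2 μ, 0 ≤ᵐ[μ] ⇑f → f ≠ 0 → ∀ᵐ x ∂μ, 0 < (T f : X → ℝ) x)
    (h_eig : Module.End.HasEigenvalue (T.toLinearMap) ‖T‖) :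
    ∃ g : Lp ℝ 2 μ, (∀ᵐ x ∂μ, 0 < (g : X → ℝ) x) ∧
      Module.End.eigenspace (T.toLinearMap) ‖T‖ = Submodule.span ℝ {g} := by
  have hT : PositivityImproving μ T := hT_impr
  obtain ⟨f, hf, hf0⟩ := h_eig.exists_hasEigenvector
  have habs := L2.abs_mem_eigenspace_norm hT.monotone hf
  have habs_pos := hT.ae_pos_of_mem_eigenspace (norm_nonneg T) habs (abs_nonneg f)
    (abs_ne_zero_of_ne_zero hf0)
  refine ⟨|f|, habs_pos, Submodule.eq_span_singleton_of_inner_eq_zero habs fun v hv horth => ?_⟩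
  by_contra hv0
  have hpos : 0 < ⟪|v|, |f|⟫_ℝ :=
    L2.real_inner_pos (abs_nonneg v) (abs_ne_zero_of_ne_zero hv0) habs_pos
  rcases hT.eq_abs_or_eq_neg_abs hv with h | h <;> rw [h, real_inner_comm] at horth
  · linarith
  · rw [inner_neg_left] at horth
    linarith

theorem perron_frobenius_faris
    {X : Type*} [MeasurableSpace X] (μ : Measure X) [SigmaFinite μ]
    (T : Lp ℝ 2 μ →L[ℝ] Lp ℝ 2 μ)
    (hT_sa : IsSelfAdjoint T)
    (hT_pos : ∀ f : Lp ℝ 2 μ, 0 ≤ ⟪f, T f⟫_ℝ)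
    (hT_impr : ∀ f : Lp ℝ 2 μ, 0 ≤ᵐ[μ] ⇑f → f ≠ 0 → ∀ᵐ x ∂μ, 0 < (T f : X → ℝ) x)
    (h_eig : Module.End.HasEigenvalue (T.toLinearMap) ‖T‖) :
    ∃ g : Lp ℝ 2 μ, (∀ᵐ x ∂μ, 0 < (g : X → ℝ) x) ∧
      Module.End.eigenspace (T.toLinearMap) ‖T‖ = Submodule.span ℝ {g} :=
  perron_frobenius_faris_general μ T hT_impr h_eig
end

section
/- Let H be a self-adjoint operator bounded from below on L²(μ). If e^{−tH} is positivity improving for every t > 0 and inf spec(H) is an eigenvalue of H, then the ground state of H is unique (the eigenspace of inf spec(H) is one-dimensional). -/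
/-!
Take `T = e^{-H}`, whose norm `λ = e^{-E₀}` is the eigenvalue of the ground states. As `T` is
positive, an eigenfunction `g` gives `λ|g| = |Tg| ≤ T|g|`, hence
`‖T|g|‖ ‖|g|‖ ≤ λ‖|g|‖² ≤ ⟪|g|, T|g|⟫`, and equality in Cauchy–Schwarz forces `T|g| = λ|g|`.
So the eigenspace is stable under `|·|`, hence under `f ↦ f⁺, f⁻`, and positivity improvement
makes each of its nonzero nonnegative elements a.e. strictly positive. If `f` is an eigenfunction
orthogonal to such a positive `g₀`, then `⟪g₀, f⁺⟫ = ⟪g₀, f⁻⟫`, so `f⁺` and `f⁻` vanish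
together or are both a.e. strictly positive; the latter contradicts `f⁺ ⊓ f⁻ = 0`.
-/

open MeasureTheory
open scoped InnerProductSpace

theorem eq_smul_of_norm_le_of_mul_norm_sq_le_inner {E : Type*} [NormedAddCommGroup E]
    [InnerProductSpace ℝ E] {u v : E} {c : ℝ} (hc : 0 ≤ c) (hu : ‖u‖ ≤ c * ‖v‖)
    (huv : c * ‖v‖ ^ 2 ≤ ⟪v, u⟫_ℝ) : u = c • v := by
  have hsq : ‖u - c • v‖ ^ 2 = ‖u‖ ^ 2 - 2 * (c * ⟪v, u⟫_ℝ) + c ^ 2 * ‖v‖ ^ 2 := by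
    rw [norm_sub_sq_real, real_inner_smul_right, real_inner_comm, norm_smul, Real.norm_eq_abs,
      abs_of_nonneg hc, mul_pow]
  have hle : ‖u - c • v‖ ^ 2 ≤ 0 := by
    rw [hsq]
    nlinarith [mul_le_mul hu hu (norm_nonneg u) (by positivity), mul_le_mul_of_nonneg_left huv hc]
  rw [← sub_eq_zero, ← norm_eq_zero]
  exact pow_eq_zero_iff two_ne_zero |>.mp (le_antisymm hle (by positivity))

theorem abs_map_le_map_abs {α β F : Type*} [Lattice α] [AddGroup α] [Lattice β] [AddGroup β]
    [FunLike F α β] [AddMonoidHomClass F α β] {T : F} (hT : Monotone T) (a : α) :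
    |T a| ≤ T |a| :=
  abs_le'.2 ⟨hT (le_abs_self a), map_neg T a ▸ hT (neg_le_abs a)⟩

theorem Submodule.posPart_mem_and_negPart_mem {E : Type*} [Lattice E] [AddCommGroup E]
    [Module ℝ E] [AddLeftMono E] {V : Submodule ℝ E} (hV : ∀ f ∈ V, |f| ∈ V) {f : E}
    (hf : f ∈ V) : f⁺ ∈ V ∧ f⁻ ∈ V := by
  have hpos : f⁺ = (2⁻¹ : ℝ) • (|f| + f) := by
    linear_combination (norm := module) (2⁻¹ : ℝ) • (posPart_add_negPart f + posPart_sub_negPart f)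
  have hpos_mem : f⁺ ∈ V := hpos ▸ V.smul_mem _ (V.add_mem (hV f hf) hf)
  have hneg : f⁻ = f⁺ - f := by
    linear_combination (norm := module) (-1 : ℝ) • posPart_sub_negPart f
  exact ⟨hpos_mem, hneg ▸ V.sub_mem hpos_mem hf⟩

namespace MeasureTheory

open Module.End

variable {X : Type*} [MeasurableSpace X] {μ : Measure X}

theorem Lp.abs_smul {p : ENNReal} (c : ℝ) (f : Lp ℝ p μ) : |c • f| = |c| • |f| := by
  apply Lp.ext
  filter_upwards [Lp.coeFn_abs (c • f), Lp.coeFn_smul c f, Lp.coeFn_smul |c| |f|,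
    Lp.coeFn_abs f] with x h1 h2 h3 h4
  simp only [h1, h2, h3, h4, Pi.smul_apply, smul_eq_mul, abs_mul]

theorem Lp.ae_neBot_of_ne_zero {E : Type*} [NormedAddCommGroup E] {p : ENNReal} {f : Lp E p μ}
    (hf : f ≠ 0) : (ae μ).NeBot := by
  refine ae_neBot.2 fun hμ => hf (Lp.ext ?_)
  rw [Filter.EventuallyEq, ae_eq_bot.2 hμ]
  exact Filter.eventually_bot

theorem Lp.inf_ne_zero_of_ae_pos {p : ENNReal} [(ae μ).NeBot] {f g : Lp ℝ p μ}
    (hf : ∀ᵐ x ∂μ, 0 < f x) (hg : ∀ᵐ x ∂μ, 0 < g x) : f ⊓ g ≠ 0 := by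
  intro hfg
  have hcontra : ∀ᵐ _ ∂μ, False := by
    filter_upwards [hf, hg, Lp.coeFn_inf f g, hfg ▸ Lp.coeFn_zero ℝ p μ] with x hfx hgx h1 h2
    simp only [h1, Pi.inf_apply, Pi.zero_apply] at h2
    exact (lt_min hfx hgx).ne' h2
  exact hcontra.exists.elim fun _ => id

theorem L2.inner_eq_integral_mul (f g : Lp ℝ 2 μ) : ⟪f, g⟫_ℝ = ∫ x, f x * g x ∂μ := by
  simp only [L2.inner_def, Real.inner_apply]

theorem L2.inner_nonneg {f g : Lp ℝ 2 μ} (hf : 0 ≤ f) (hg : 0 ≤ g) : 0 ≤ ⟪f, g⟫_ℝ := by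
  rw [L2.inner_eq_integral_mul]
  refine integral_nonneg_of_ae ?_
  filter_upwards [(Lp.coeFn_nonneg f).2 hf, (Lp.coeFn_nonneg g).2 hg] with x hfx hgx
  exact mul_nonneg hfx hgx

theorem L2.inner_pos_of_ae_pos [(ae μ).NeBot] {f g : Lp ℝ 2 μ} (hf : ∀ᵐ x ∂μ, 0 < f x)
    (hg : ∀ᵐ x ∂μ, 0 < g x) : 0 < ⟪f, g⟫_ℝ := by
  have hprod : ∀ᵐ x ∂μ, 0 < f x * g x := by
    filter_upwards [hf, hg] with x hfx hgx
    exact mul_pos hfx hgx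
  rw [L2.inner_eq_integral_mul]
  refine (integral_nonneg_of_ae (hprod.mono fun _ => le_of_lt)).lt_of_ne fun h => ?_
  have hzero := (integral_eq_zero_iff_of_nonneg_ae (hprod.mono fun _ => le_of_lt)
    (by simpa only [Real.inner_apply] using L2.integrable_inner (𝕜 := ℝ) f g)).1 h.symm
  obtain ⟨x, hx, hx0⟩ := (hprod.and hzero).exists
  exact hx.ne' hx0

def PositivityImproving {p : ENNReal} [Fact (1 ≤ p)] (T : Lp ℝ p μ →L[ℝ] Lp ℝ p μ) : Prop :=
  ∀ f : Lp ℝ p μ, 0 ≤ᵐ[μ] ⇑f → f ≠ 0 → ∀ᵐ x ∂μ, 0 < (T f : X → ℝ) x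

theorem PositivityImproving.monotone {p : ENNReal} [Fact (1 ≤ p)] {T : Lp ℝ p μ →L[ℝ] Lp ℝ p μ}
    (hT : PositivityImproving T) : Monotone T := by
  intro f g hfg
  rw [← sub_nonneg, ← map_sub]
  rw [← sub_nonneg, ← Lp.coeFn_nonneg] at hfg
  rcases eq_or_ne (g - f) 0 with h0 | h0
  · rw [h0, map_zero]
  · exact (Lp.coeFn_nonneg _).1 <| (hT _ hfg h0).mono fun _ => le_of_lt

section Eigenspace

variable {T : Lp ℝ 2 μ →L[ℝ] Lp ℝ 2 μ}

theorem PositivityImproving.ae_pos_of_mem_eigenspace (hT : PositivityImproving T) {c : ℝ}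
    {f : Lp ℝ 2 μ} (hf : f ∈ eigenspace T.toLinearMap c)
    (hf0 : f ≠ 0) (hf_nonneg : 0 ≤ f) : ∀ᵐ x ∂μ, 0 < f x := by
  have hTf := hT f ((Lp.coeFn_nonneg f).2 hf_nonneg) hf0
  rw [show T f = c • f from mem_eigenspace_iff.1 hf] at hTf
  filter_upwards [hTf, Lp.coeFn_smul c f, (Lp.coeFn_nonneg f).2 hf_nonneg] with x hx hsmul hfx
  rw [hsmul, Pi.smul_apply, smul_eq_mul] at hx
  exact pos_of_mul_pos_right hx (pos_of_mul_pos_left hx hfx).le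

theorem abs_mem_eigenspace_opNorm (hT : Monotone T) {g : Lp ℝ 2 μ}
    (hg : g ∈ eigenspace T.toLinearMap ‖T‖) :
    |g| ∈ eigenspace T.toLinearMap ‖T‖ := by
  rw [mem_eigenspace_iff] at hg ⊢
  have hle : ‖T‖ • |g| ≤ T |g| := by
    have hTg : T g = ‖T‖ • g := hg
    simpa only [hTg, Lp.abs_smul, abs_norm] using abs_map_le_map_abs hT g
  refine eq_smul_of_norm_le_of_mul_norm_sq_le_inner (norm_nonneg T) (T.le_opNorm _) ?_
  calc ‖T‖ * ‖|g|‖ ^ 2 = ⟪|g|, ‖T‖ • |g|⟫_ℝ := by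
        rw [real_inner_smul_right, real_inner_self_eq_norm_sq]
    _ ≤ ⟪|g|, T |g|⟫_ℝ := by
        rw [← sub_nonneg, ← inner_sub_right]
        exact L2.inner_nonneg (abs_nonneg g) (sub_nonneg.2 hle)

theorem PositivityImproving.eq_zero_of_mem_eigenspace_opNorm_of_inner_eq_zero
    (hT : PositivityImproving T) {g f : Lp ℝ 2 μ} (hg : ∀ᵐ x ∂μ, 0 < g x)
    (hf : f ∈ eigenspace T.toLinearMap ‖T‖) (horth : ⟪g, f⟫_ℝ = 0) :
    f = 0 := by
  obtain ⟨hpos, hneg⟩ := Submodule.posPart_mem_and_negPart_mem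
    (fun _ hh => abs_mem_eigenspace_opNorm hT.monotone hh) hf
  have hzero_iff : ∀ h ∈ eigenspace T.toLinearMap ‖T‖, 0 ≤ h →
      (h = 0 ↔ ⟪g, h⟫_ℝ = 0) := by
    refine fun h hh hh_nonneg => ⟨fun h0 => h0 ▸ inner_zero_right g, fun hi => ?_⟩
    by_contra h0
    have := Lp.ae_neBot_of_ne_zero h0
    exact (L2.inner_pos_of_ae_pos hg (hT.ae_pos_of_mem_eigenspace hh h0 hh_nonneg)).ne' hi
  have hinner : ⟪g, f⁺⟫_ℝ = ⟪g, f⁻⟫_ℝ := by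
    rw [← sub_eq_zero, ← inner_sub_right, posPart_sub_negPart, horth]
  have hparts : f⁺ = 0 ↔ f⁻ = 0 := by
    rw [hzero_iff _ hpos (posPart_nonneg f), hzero_iff _ hneg (negPart_nonneg f), hinner]
  by_contra hf0
  have hpos0 : f⁺ ≠ 0 := fun h => hf0 (by rw [← posPart_sub_negPart f, h, hparts.1 h, sub_zero])
  have := Lp.ae_neBot_of_ne_zero hpos0
  exact Lp.inf_ne_zero_of_ae_pos (hT.ae_pos_of_mem_eigenspace hpos hpos0 (posPart_nonneg f))
    (hT.ae_pos_of_mem_eigenspace hneg (hparts.not.1 hpos0) (negPart_nonneg f))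
    (posPart_inf_negPart_eq_zero f)

theorem PositivityImproving.exists_eigenspace_opNorm_eq_span_singleton
    (hT : PositivityImproving T) (hV : eigenspace T.toLinearMap ‖T‖ ≠ ⊥) :
    ∃ g : Lp ℝ 2 μ, g ≠ 0 ∧
      eigenspace T.toLinearMap ‖T‖ = Submodule.span ℝ {g} := by
  obtain ⟨g, hg, hg0⟩ := Submodule.exists_mem_ne_zero_of_ne_bot hV
  have habs := abs_mem_eigenspace_opNorm hT.monotone hg
  have habs0 : |g| ≠ 0 := by rwa [← norm_ne_zero_iff, norm_abs_eq_norm, norm_ne_zero_iff]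
  have habs_pos := hT.ae_pos_of_mem_eigenspace habs habs0 (abs_nonneg g)
  have horth : (ℝ ∙ |g|)ᗮ ⊓ eigenspace T.toLinearMap ‖T‖ = ⊥ :=
    eq_bot_iff.2 fun f ⟨hf_orth, hf⟩ => (Submodule.mem_bot ℝ).2 <|
      hT.eq_zero_of_mem_eigenspace_opNorm_of_inner_eq_zero habs_pos hf
        (Submodule.mem_orthogonal_singleton_iff_inner_right.1 hf_orth)
  refine ⟨|g|, habs0, ?_⟩
  rw [← Submodule.sup_orthogonal_inf_of_hasOrthogonalProjection
    ((Submodule.span_singleton_le_iff_mem _ _).2 habs), horth, sup_bot_eq]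

end Eigenspace

end MeasureTheory

theorem ground_state_unique_general
    {X : Type*} [MeasurableSpace X] (μ : Measure X)
    (S : ℝ → Lp ℝ 2 μ →L[ℝ] Lp ℝ 2 μ) (E₀ : ℝ)
    (G : Submodule ℝ (Lp ℝ 2 μ))  -- the eigenspace of `H` at `E₀ = inf spec H`
    (hS_norm : ∀ t : ℝ, 0 < t → ‖S t‖ = Real.exp (-t * E₀))
    (hS_impr : ∀ t : ℝ, 0 < t → ∀ f : Lp ℝ 2 μ, 0 ≤ᵐ[μ] ⇑f → f ≠ 0 →
      ∀ᵐ x ∂μ, 0 < (S t f : X → ℝ) x)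
    (h_link : ∀ t : ℝ, 0 < t →
      G = Module.End.eigenspace ((S t).toLinearMap) (Real.exp (-t * E₀)))
    (h_eig : G ≠ ⊥) :
    ∃ g : Lp ℝ 2 μ, g ≠ 0 ∧ G = Submodule.span ℝ {g} := by
  rw [h_link 1 one_pos, ← hS_norm 1 one_pos] at h_eig ⊢
  exact PositivityImproving.exists_eigenspace_opNorm_eq_span_singleton (hS_impr 1 one_pos) h_eig

/-- Uniqueness of the ground state for a self-adjoint operator `H` bounded from
below whose semigroup `S t = e^{-tH}` is positivity improving.  The (possibly
unbounded) operator `H` enters only through its semigroup `S`, its ground-state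
energy `E₀ = inf spec H` (so `‖S t‖ = e^{-t E₀}`), and its lowest eigenspace
`G = ker (H - E₀)`, which coincides with the `e^{-t E₀}`-eigenspace of `S t`. -/
theorem ground_state_unique
    {X : Type*} [MeasurableSpace X] (μ : Measure X) [SigmaFinite μ]
    (S : ℝ → Lp ℝ 2 μ →L[ℝ] Lp ℝ 2 μ) (E₀ : ℝ)
    (G : Submodule ℝ (Lp ℝ 2 μ))  -- the eigenspace of `H` at `E₀ = inf spec H`
    (hS_sa : ∀ t : ℝ, 0 < t → IsSelfAdjoint (S t))
    (hS_semigroup : ∀ t u : ℝ, 0 < t → 0 < u → (S t).comp (S u) = S (t + u))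
    (hS_norm : ∀ t : ℝ, 0 < t → ‖S t‖ = Real.exp (-t * E₀))
    (hS_impr : ∀ t : ℝ, 0 < t → ∀ f : Lp ℝ 2 μ, 0 ≤ᵐ[μ] ⇑f → f ≠ 0 →
      ∀ᵐ x ∂μ, 0 < (S t f : X → ℝ) x)
    (h_link : ∀ t : ℝ, 0 < t →
      G = Module.End.eigenspace ((S t).toLinearMap) (Real.exp (-t * E₀)))
    (h_eig : G ≠ ⊥) :
    ∃ g : Lp ℝ 2 μ, g ≠ 0 ∧ G = Submodule.span ℝ {g} :=
  ground_state_unique_general μ S E₀ G hS_norm hS_impr h_link h_eig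
end
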